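/- There exists a universal constant C₀ ≥ 0 with the following property. Let A be an m×n matrix with entries in [0,1] whose ℓ0-column sparsity Δ₀ satisfies Δ₀ ≥ 2, let c ∈ ℝ_{≥0}^n, let d ∈ ℕ^n, and let x ∈ ℝ_{≥0}^n satisfy the knapsack covering constraints with respect to A and d. Then there exists a random vector z ∈ ℕ^n such that almost surely Az ≥ 1 componentwise and z ≤ d componentwise, and E[⟨c,z⟩] ≤ (ln Δ₀ + ln ln Δ₀ + C₀)·⟨c,x⟩. -/

import Mathlib

/-!
Scale `x` by `r = log Δ₀ + log log Δ₀ + 2` and round: an item with `d j ≤ r x j` is taken at full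
multiplicity `d j`, any other item `⌊r x j⌋` times plus once more with probability the fractional
part of `r x j`. The knapsack-cover inequality for the set of fully taken items puts mean at least
`r` times the residual demand on each row, so by a Chernoff bound a row stays uncovered with
probability at most `r e^{2 - r} = r / (Δ₀ log Δ₀)`. An uncovered row is repaired by an integral
cover of cost at most twice the LP cost on its support, which the local-ratio method extracts from
the knapsack-cover inequalities; as each column meets at most `Δ₀` rows, the expected repair cost
is `O(⟨c, x⟩)`.
-/

open Finset Real MeasureTheory

section RowCover

variable {ι : Type*} {a : ι → ℝ} {d : ι → ℕ} {b : ℝ} {J : Finset ι}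

structure IsRowCover (a : ι → ℝ) (d : ι → ℕ) (b : ℝ) (J : Finset ι) (w : ι → ℕ) : Prop where
  eq_zero_of_notMem : ∀ j ∉ J, w j = 0
  le_bound : ∀ j, w j ≤ d j
  le_sum_mul : b ≤ ∑ j ∈ J, a j * w j
  /-- Capped at any level `β ≥ b`, the cover overshoots by at most `β`: this is what lets the
  local-ratio step lose only a factor `2`. -/
  sum_min_mul_le : ∀ β, b ≤ β → ∑ j ∈ J, min (a j) β * w j ≤ b + β

theorem IsRowCover.sum_mul_le_of_localRatio {w : ι → ℕ} {c x : ι → ℝ} {δ : ℝ}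
    (hw : IsRowCover a d b J w) (hx : b ≤ ∑ j ∈ J, min (a j) b * x j) (hδ : 0 ≤ δ)
    (h : ∑ j ∈ J, (c j - δ * min (a j) b) * w j ≤ 2 * ∑ j ∈ J, (c j - δ * min (a j) b) * x j) :
    ∑ j ∈ J, c j * w j ≤ 2 * ∑ j ∈ J, c j * x j := by
  simp only [sub_mul, sum_sub_distrib, mul_assoc, ← mul_sum] at h
  have := mul_le_mul_of_nonneg_left (hw.sum_min_mul_le b le_rfl) hδ
  nlinarith

theorem exists_localRatio_pivot {c x : ι → ℝ} (hc : ∀ j ∈ J, 0 ≤ c j) (ha : ∀ j, 0 ≤ a j)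
    (hb : 0 < b) (hx : b ≤ ∑ j ∈ J, min (a j) b * x j) :
    ∃ δ ≥ 0, ∃ j₀ ∈ J, c j₀ = δ * min (a j₀) b ∧ ∀ j ∈ J, δ * min (a j) b ≤ c j := by
  have hmin {j} (hj : 0 < a j) : 0 < min (a j) b := lt_min hj hb
  have hne : (J.filter (0 < a ·)).Nonempty := by
    by_contra h
    have hJ : ∀ j ∈ J, min (a j) b * x j = 0 := fun j hj => by
      rw [(ha j).antisymm' (not_lt.1 fun h' => h ⟨j, mem_filter.2 ⟨hj, h'⟩⟩), min_eq_left hb.le,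
        zero_mul]
    rw [sum_eq_zero hJ] at hx
    exact hb.not_ge hx
  obtain ⟨j₀, hj₀, hmin₀⟩ := (J.filter (0 < a ·)).exists_min_image (fun j => c j / min (a j) b) hne
  obtain ⟨hj₀J, ha₀⟩ := mem_filter.1 hj₀
  refine ⟨c j₀ / min (a j₀) b, div_nonneg (hc j₀ hj₀J) (hmin ha₀).le, j₀, hj₀J,
    (div_mul_cancel₀ _ (hmin ha₀).ne').symm, fun j hj => ?_⟩
  rcases (ha j).eq_or_lt with haj | haj
  · rw [← haj, min_eq_left hb.le, mul_zero]
    exact hc j hj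
  · exact (le_div_iff₀ (hmin haj)).1 (hmin₀ j (mem_filter.2 ⟨hj, haj⟩))

variable [DecidableEq ι]

def KnapsackCover (a : ι → ℝ) (d : ι → ℕ) (b : ℝ) (J : Finset ι) (x : ι → ℝ) : Prop :=
  ∀ S ⊆ J, max 0 (b - ∑ j ∈ S, a j * d j) ≤
    ∑ j ∈ J \ S, min (a j) (max 0 (b - ∑ j' ∈ S, a j' * d j')) * x j

theorem sum_mul_update {j₀ : ι} (hj₀ : j₀ ∈ J) (f : ι → ℝ) (w : ι → ℕ) (k : ℕ) :
    ∑ j ∈ J, f j * (Function.update w j₀ k j : ℝ) = f j₀ * k + ∑ j ∈ J.erase j₀, f j * w j := by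
  rw [← add_sum_erase J _ hj₀, Function.update_self]
  congr 1
  exact sum_congr rfl fun j hj => by rw [Function.update_of_ne (ne_of_mem_erase hj)]

theorem KnapsackCover.restrict {K : Finset ι} {x : ι → ℝ} (h : KnapsackCover a d b K x)
    (hJK : J ⊆ K) (ha : ∀ j ∈ K, j ∉ J → a j = 0) : KnapsackCover a d b J x := by
  intro S hS
  refine (h S (hS.trans hJK)).trans_eq (sum_subset (sdiff_subset_sdiff hJK le_rfl) ?_).symm
  intro j hjK hjJ
  obtain ⟨hjK, hjS⟩ := mem_sdiff.1 hjK
  rw [ha j hjK fun hj => hjJ (mem_sdiff.2 ⟨hj, hjS⟩), min_eq_left (le_max_left _ _), zero_mul]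

theorem KnapsackCover.erase {x : ι → ℝ} {j₀ : ι} (h : KnapsackCover a d b J x) (hj₀ : j₀ ∈ J) :
    KnapsackCover a d (b - a j₀ * d j₀) (J.erase j₀) x := by
  intro S hS
  have hj₀S : j₀ ∉ S := fun h => (mem_erase.1 (hS h)).1 rfl
  have := h (insert j₀ S) (insert_subset hj₀ (hS.trans (erase_subset _ _)))
  rwa [sum_insert hj₀S, sdiff_insert, ← erase_sdiff_comm, ← sub_sub] at this

theorem KnapsackCover.le_sum_min {x : ι → ℝ} (h : KnapsackCover a d b J x) (hb : 0 ≤ b) :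
    b ≤ ∑ j ∈ J, min (a j) b * x j := by
  simpa [max_eq_right hb] using h ∅ (empty_subset _)

theorem isRowCover_update_zero {j₀ : ι} (hj₀ : j₀ ∈ J) (hb : 0 < b) (hbd : b ≤ a j₀ * d j₀) :
    IsRowCover a d b J (Function.update 0 j₀ ⌈b / a j₀⌉₊) := by
  have ha : 0 < a j₀ := pos_of_mul_pos_left (hb.trans_le hbd) (Nat.cast_nonneg _)
  have hsum (f : ι → ℝ) : ∑ j ∈ J, f j * (Function.update (0 : ι → ℕ) j₀ ⌈b / a j₀⌉₊ j : ℝ)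
      = f j₀ * ⌈b / a j₀⌉₊ := by
    simp [sum_mul_update hj₀]
  refine ⟨fun j hj => Function.update_of_ne (ne_of_mem_of_not_mem hj₀ hj).symm _ _, fun j => ?_,
    ?_, fun β hβ => ?_⟩
  · rcases eq_or_ne j j₀ with rfl | hj
    · rw [Function.update_self]
      exact Nat.ceil_le.2 ((div_le_iff₀' ha).2 hbd)
    · simp [Function.update_of_ne hj]
  · rw [hsum, ← div_le_iff₀' ha]
    exact Nat.le_ceil _
  · rw [hsum]
    -- either one copy suffices, or `a j₀ < b` and the last copy overshoots `b` by less than `a j₀`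
    rcases le_or_gt (b / a j₀) 1 with h1 | h1
    · have hk : (⌈b / a j₀⌉₊ : ℝ) ≤ 1 := by exact_mod_cast Nat.ceil_le.2 (by exact_mod_cast h1)
      nlinarith [min_le_right (a j₀) β, le_min ha.le (hb.le.trans hβ),
        Nat.cast_nonneg (α := ℝ) ⌈b / a j₀⌉₊]
    · have hab : a j₀ < b := (one_lt_div ha).1 h1
      have hk := Nat.ceil_lt_add_one (div_nonneg hb.le ha.le)
      rw [min_eq_left (hab.le.trans hβ)]
      have := mul_lt_mul_of_pos_left hk ha
      rw [mul_add, mul_div_cancel₀ _ ha.ne'] at this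
      linarith

theorem IsRowCover.update {w : ι → ℕ} {j₀ : ι}
    (hw : IsRowCover a d (b - a j₀ * d j₀) (J.erase j₀) w) (hj₀ : j₀ ∈ J) (ha : 0 ≤ a j₀) :
    IsRowCover a d b J (Function.update w j₀ (d j₀)) := by
  have had : 0 ≤ a j₀ * d j₀ := mul_nonneg ha (Nat.cast_nonneg _)
  refine ⟨fun j hj => ?_, fun j => ?_, ?_, fun β hβ => ?_⟩
  · have hne : j ≠ j₀ := ne_of_mem_of_not_mem hj₀ hj |>.symm
    rw [Function.update_of_ne hne]
    exact hw.eq_zero_of_notMem j fun h => hj (mem_of_mem_erase h)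
  · rcases eq_or_ne j j₀ with rfl | hj
    · rw [Function.update_self]
    · rw [Function.update_of_ne hj]; exact hw.le_bound j
  · rw [sum_mul_update hj₀]
    linarith [hw.le_sum_mul]
  · rw [sum_mul_update hj₀]
    have := hw.sum_min_mul_le β (by linarith)
    have := mul_le_mul_of_nonneg_right (min_le_left (a j₀) β) (Nat.cast_nonneg (α := ℝ) (d j₀))
    linarith

theorem exists_isRowCover_sum_mul_le {x : ι → ℝ} (ha : ∀ j, 0 ≤ a j) (hx : ∀ j, 0 ≤ x j)
    (J : Finset ι) (c : ι → ℝ) (b : ℝ) (hc : ∀ j ∈ J, 0 ≤ c j) (hb : 0 < b)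
    (hJ : KnapsackCover a d b J x) :
    ∃ w, IsRowCover a d b J w ∧ ∑ j ∈ J, c j * w j ≤ 2 * ∑ j ∈ J, c j * x j := by
  induction J using Finset.strongInduction generalizing c b with
  | H J ih =>
  obtain ⟨δ, hδ, j₀, hj₀, hcj₀, hδc⟩ := exists_localRatio_pivot hc ha hb (hJ.le_sum_min hb.le)
  -- local ratio: `j₀` is free for `c'`, and any cover is within `2` of the LP for `δ * min (a j) b`
  set c' : ι → ℝ := fun j => c j - δ * min (a j) b
  have hc' : ∀ j ∈ J, 0 ≤ c' j := fun j hj => sub_nonneg.2 (hδc j hj)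
  have hc'j₀ : c' j₀ = 0 := sub_eq_zero.2 hcj₀
  suffices ∃ w, IsRowCover a d b J w ∧ ∑ j ∈ J, c' j * w j ≤ 2 * ∑ j ∈ J, c' j * x j by
    obtain ⟨w, hw, hcost⟩ := this
    exact ⟨w, hw, hw.sum_mul_le_of_localRatio (hJ.le_sum_min hb.le) hδ hcost⟩
  by_cases hbd : b ≤ a j₀ * d j₀
  · refine ⟨_, isRowCover_update_zero hj₀ hb hbd, ?_⟩
    rw [sum_mul_update hj₀, hc'j₀]
    simpa using sum_nonneg fun j hj => mul_nonneg (hc' j hj) (hx j)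
  · obtain ⟨w, hw, hcost⟩ := ih _ (erase_ssubset hj₀) c' (b - a j₀ * d j₀)
      (fun j hj => hc' j (mem_of_mem_erase hj)) (by linarith) (hJ.erase hj₀)
    refine ⟨_, hw.update hj₀ (ha j₀), ?_⟩
    rwa [sum_mul_update hj₀, ← add_sum_erase J _ hj₀, hc'j₀, zero_mul, zero_mul, zero_add, zero_add]

end RowCover

section Repair

variable {ι κ : Type*} [Fintype ι] [Fintype κ]

theorem sum_sum_filter_ne_zero_le {A : κ → ι → ℝ} {f : ι → ℝ} (hf : ∀ j, 0 ≤ f j) {D : ℕ}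
    (hD : ∀ j, #{i | A i j ≠ 0} ≤ D) :
    ∑ i, ∑ j with A i j ≠ 0, f j ≤ D * ∑ j, f j := by
  rw [sum_comm' (t' := univ) (s' := fun j => {i | A i j ≠ 0}) fun i j => by simp, mul_sum]
  refine sum_le_sum fun j _ => ?_
  rw [sum_const, nsmul_eq_mul]
  exact mul_le_mul_of_nonneg_right (by exact_mod_cast hD j) (hf j)

variable [DecidableEq ι]

theorem exists_cover_sum_mul_le {a c x : ι → ℝ} {d : ι → ℕ} (ha : ∀ j, 0 ≤ a j)
    (hc : ∀ j, 0 ≤ c j) (hx : ∀ j, 0 ≤ x j)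
    (hKC : ∀ S : Finset ι, max 0 (1 - ∑ j ∈ S, a j * d j) ≤
      ∑ j ∈ Sᶜ, min (a j) (max 0 (1 - ∑ j' ∈ S, a j' * d j')) * x j) :
    ∃ w : ι → ℕ, (∀ j, w j ≤ d j) ∧ 1 ≤ ∑ j, a j * w j ∧
      ∑ j, c j * w j ≤ 2 * ∑ j with a j ≠ 0, c j * x j := by
  have hJ : KnapsackCover a d 1 univ x := fun S _ => by simpa [compl_eq_univ_sdiff] using hKC S
  obtain ⟨w, hw, hcost⟩ := exists_isRowCover_sum_mul_le ha hx {j | a j ≠ 0} c 1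
    (fun j _ => hc j) one_pos (hJ.restrict (subset_univ _) fun j _ hj => by simpa using hj)
  refine ⟨w, hw.le_bound, hw.le_sum_mul.trans_eq (sum_subset (subset_univ _) fun j _ hj => ?_), ?_⟩
  · simp [by simpa using hj]
  · rwa [← sum_subset (subset_univ _) fun j _ hj => by simp [hw.eq_zero_of_notMem j hj]]

theorem exists_covers_sum_sum_mul_le {A : κ → ι → ℝ} {c x : ι → ℝ} {d : ι → ℕ}
    (hA : ∀ i j, 0 ≤ A i j) (hc : ∀ j, 0 ≤ c j) (hx : ∀ j, 0 ≤ x j)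
    (hKC : ∀ (S : Finset ι) (i : κ), max 0 (1 - ∑ j ∈ S, A i j * d j) ≤
      ∑ j ∈ Sᶜ, min (A i j) (max 0 (1 - ∑ j' ∈ S, A i j' * d j')) * x j)
    {D : ℕ} (hD : ∀ j, #{i | A i j ≠ 0} ≤ D) :
    ∃ w : κ → ι → ℕ, (∀ i j, w i j ≤ d j) ∧ (∀ i, 1 ≤ ∑ j, A i j * w i j) ∧
      ∑ i, ∑ j, c j * w i j ≤ 2 * (D * ∑ j, c j * x j) := by
  choose w hwd hw hwc using fun i => exists_cover_sum_mul_le (hA i) hc hx (hKC · i)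
  refine ⟨w, hwd, hw, ?_⟩
  calc ∑ i, ∑ j, c j * w i j ≤ 2 * ∑ i, ∑ j with A i j ≠ 0, c j * x j := by
        rw [mul_sum]; exact sum_le_sum fun i _ => hwc i
    _ ≤ 2 * (D * ∑ j, c j * x j) := by
        gcongr
        exact sum_sum_filter_ne_zero_le (fun j => mul_nonneg (hc j) (hx j)) hD

end Repair

section Bernoulli

variable {ι : Type*} [Fintype ι] {p : ι → ℝ}

def bernoulliWeight (p : ι → ℝ) (ω : ι → Bool) : ℝ := ∏ j, if ω j then p j else 1 - p j

theorem bernoulliWeight_nonneg (hp : ∀ j, p j ∈ Set.Icc 0 1) (ω : ι → Bool) :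
    0 ≤ bernoulliWeight p ω :=
  prod_nonneg fun j _ => by split_ifs <;> linarith [(hp j).1, (hp j).2]

variable [DecidableEq ι]

theorem sum_bernoulliWeight_mul_prod (p : ι → ℝ) (h : ι → Bool → ℝ) :
    ∑ ω, bernoulliWeight p ω * ∏ j, h j (ω j) = ∏ j, (p j * h j true + (1 - p j) * h j false) := by
  simp_rw [bernoulliWeight, ← prod_mul_distrib]
  rw [← Fintype.prod_sum (fun j (v : Bool) => (if v then p j else 1 - p j) * h j v)]
  simp

theorem sum_bernoulliWeight (p : ι → ℝ) : ∑ ω, bernoulliWeight p ω = 1 := by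
  simpa using sum_bernoulliWeight_mul_prod p fun _ _ => 1

theorem sum_bernoulliWeight_mul_toNat (p : ι → ℝ) (j₀ : ι) :
    ∑ ω, bernoulliWeight p ω * (ω j₀).toNat = p j₀ := by
  have hfactor (j : ι) : p j * (if j = j₀ then ((true.toNat : ℕ) : ℝ) else 1) +
      (1 - p j) * (if j = j₀ then ((false.toNat : ℕ) : ℝ) else 1) = if j = j₀ then p j else 1 := by
    split_ifs <;> simp
  have h := sum_bernoulliWeight_mul_prod p fun j v => if j = j₀ then ((v.toNat : ℕ) : ℝ) else 1
  simpa only [hfactor, prod_ite_eq', mem_univ, if_true] using h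

theorem mul_exp_neg_add_one_sub_le_exp {q θ t : ℝ} (hq : q ∈ Set.Icc (0 : ℝ) 1)
    (hθ : θ ∈ Set.Icc (0 : ℝ) 1) :
    q * exp (-(t * θ)) + (1 - q) ≤ exp (q * θ * (exp (-t) - 1)) := by
  have hconv : exp (-(t * θ)) ≤ 1 - θ + θ * exp (-t) := by
    have := convexOn_exp.2 (Set.mem_univ 0) (Set.mem_univ (-t)) (sub_nonneg.2 hθ.2) hθ.1
      (by ring)
    simpa [show (1 - θ) * 0 + θ * -t = -(t * θ) by ring, mul_comm] using this
  nlinarith [add_one_le_exp (q * θ * (exp (-t) - 1)), hq.1]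

theorem sum_bernoulliWeight_filter_lt_le_exp (hp : ∀ j, p j ∈ Set.Icc 0 1) {θ : ι → ℝ}
    (hθ : ∀ j, θ j ∈ Set.Icc 0 1) {γ t : ℝ} (ht : 0 ≤ t) :
    ∑ ω with ∑ j, θ j * (ω j).toNat < γ, bernoulliWeight p ω ≤
      exp (t * γ + (∑ j, θ j * p j) * (exp (-t) - 1)) := by
  calc ∑ ω with ∑ j, θ j * (ω j).toNat < γ, bernoulliWeight p ω
      ≤ ∑ ω, bernoulliWeight p ω * exp (t * (γ - ∑ j, θ j * (ω j).toNat)) := by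
        rw [sum_filter]
        refine sum_le_sum fun ω _ => ?_
        split_ifs with h
        · exact le_mul_of_one_le_right (bernoulliWeight_nonneg hp ω)
            (one_le_exp (mul_nonneg ht (by linarith)))
        · exact mul_nonneg (bernoulliWeight_nonneg hp ω) (exp_pos _).le
    _ = exp (t * γ) * ∏ j, (p j * exp (-(t * θ j)) + (1 - p j)) := by
        have := sum_bernoulliWeight_mul_prod p fun j v => exp (-(t * θ j) * v.toNat)
        simp only [Bool.toNat_true, Bool.toNat_false, Nat.cast_one, Nat.cast_zero, mul_one,
          mul_zero, exp_zero] at this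
        rw [← this, mul_sum]
        refine sum_congr rfl fun ω _ => ?_
        rw [← exp_sum, mul_left_comm, ← exp_add, mul_sub, mul_sum, sub_eq_add_neg,
          ← sum_neg_distrib]
        simp only [neg_mul, mul_assoc]
    _ ≤ exp (t * γ) * ∏ j, exp (p j * θ j * (exp (-t) - 1)) := by
        gcongr with j
        · exact fun j _ => add_nonneg (mul_nonneg (hp j).1 (exp_pos _).le) (sub_nonneg.2 (hp j).2)
        · exact mul_exp_neg_add_one_sub_le_exp (hp j) (hθ j)
    _ = exp (t * γ + (∑ j, θ j * p j) * (exp (-t) - 1)) := by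
        rw [← exp_sum, ← exp_add, sum_mul]
        congr 2
        exact sum_congr rfl fun j _ => by ring

theorem chernoff_exponent_le {r γ μ : ℝ} (hr : 1 ≤ r) (hγ : γ ∈ Set.Icc (0 : ℝ) 1)
    (hμ : r - 1 + γ ≤ μ) : log r * γ + μ * (exp (-log r) - 1) ≤ log r + (2 - r) := by
  have hr0 : 0 < r := one_pos.trans_le hr
  rw [exp_neg, exp_log hr0]
  have hinv : r⁻¹ ≤ 1 := inv_le_one_of_one_le₀ hr
  have hrinv : r * r⁻¹ = 1 := mul_inv_cancel₀ hr0.ne'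
  nlinarith [log_nonneg hr, hγ.1, hγ.2, inv_pos.2 hr0]

theorem sum_bernoulliWeight_filter_lt_le (hp : ∀ j, p j ∈ Set.Icc 0 1) {θ : ι → ℝ}
    (hθ : ∀ j, θ j ∈ Set.Icc 0 1) {γ r : ℝ} (hγ : γ ≤ 1) (hr : 1 ≤ r)
    (hμ : r - 1 + γ ≤ ∑ j, θ j * p j) :
    ∑ ω with ∑ j, θ j * (ω j).toNat < γ, bernoulliWeight p ω ≤ r * exp (2 - r) := by
  have hr0 : 0 < r := one_pos.trans_le hr
  rcases lt_or_ge γ 0 with hγ0 | hγ0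
  · rw [filter_false_of_mem fun ω _ => not_lt.2 <| hγ0.le.trans <|
      sum_nonneg fun j _ => mul_nonneg (hθ j).1 (Nat.cast_nonneg _), sum_empty]
    positivity
  calc _ ≤ exp (log r * γ + (∑ j, θ j * p j) * (exp (-log r) - 1)) :=
        sum_bernoulliWeight_filter_lt_le_exp hp hθ (log_nonneg hr)
    _ ≤ exp (log r + (2 - r)) := exp_le_exp.2 (chernoff_exponent_le hr ⟨hγ0, hγ⟩ hμ)
    _ = r * exp (2 - r) := by rw [exp_add, exp_log hr0]

end Bernoulli

section Rounding

variable {ι : Type*}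

noncomputable def baseRound (r : ℝ) (d : ι → ℕ) (x : ι → ℝ) (ω : ι → Bool) (j : ι) : ℕ :=
  if (d j : ℝ) ≤ r * x j then d j else ⌊r * x j⌋₊ + (ω j).toNat

variable {r : ℝ} {d : ι → ℕ} {x : ι → ℝ}

theorem baseRound_le (ω : ι → Bool) (j : ι) (hrx : 0 ≤ r * x j) : baseRound r d x ω j ≤ d j := by
  unfold baseRound
  split_ifs with h
  · rfl
  · have : ⌊r * x j⌋₊ < d j := Nat.floor_lt hrx |>.2 (not_le.1 h)
    have := Bool.toNat_le (ω j)
    omega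

variable [Fintype ι]

theorem sum_mul_baseRound_eq {θ : ι → ℝ} (hθ : ∀ j, (d j : ℝ) ≤ r * x j → θ j = 0)
    (ω : ι → Bool) :
    ∑ j, θ j * baseRound r d x ω j = ∑ j, θ j * ⌊r * x j⌋₊ + ∑ j, θ j * (ω j).toNat := by
  rw [← sum_add_distrib]
  refine sum_congr rfl fun j _ => ?_
  unfold baseRound
  split_ifs with h
  · simp [hθ j h]
  · push_cast
    ring

variable [DecidableEq ι]

theorem sum_bernoulliWeight_mul_baseRound_le (j : ι) (hrx : 0 ≤ r * x j) :
    ∑ ω, bernoulliWeight (fun j => Int.fract (r * x j)) ω * baseRound r d x ω j ≤ r * x j := by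
  unfold baseRound
  split_ifs with h
  · simpa [← sum_mul, sum_bernoulliWeight] using h
  · simp only [Nat.cast_add, mul_add, sum_add_distrib, ← sum_mul, sum_bernoulliWeight, one_mul,
      sum_bernoulliWeight_mul_toNat]
    rw [natCast_floor_eq_intCast_floor hrx, Int.floor_add_fract]

theorem one_le_sum_mul_of_residual_le {a : ι → ℝ} {S : Finset ι} {u : ι → ℕ}
    (hu : ∀ j ∈ S, u j = d j)
    (h : max 0 (1 - ∑ j ∈ S, a j * d j) ≤
      ∑ j ∈ Sᶜ, min (a j) (max 0 (1 - ∑ j' ∈ S, a j' * d j')) * u j) :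
    1 ≤ ∑ j, a j * u j := by
  have hmin : ∑ j ∈ Sᶜ, min (a j) (max 0 (1 - ∑ j' ∈ S, a j' * d j')) * u j ≤
      ∑ j ∈ Sᶜ, a j * u j :=
    sum_le_sum fun j _ => mul_le_mul_of_nonneg_right (min_le_left _ _) (Nat.cast_nonneg _)
  rw [← sum_add_sum_compl S, sum_congr rfl fun j hj => by rw [hu j hj]]
  linarith [le_max_right 0 (1 - ∑ j ∈ S, a j * d j)]

theorem sum_bernoulliWeight_filter_sum_mul_baseRound_lt_le {a : ι → ℝ}
    (ha : ∀ j, 0 ≤ a j) (hx : ∀ j, 0 ≤ x j) (hr : 1 ≤ r)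
    (hKC : ∀ S : Finset ι, max 0 (1 - ∑ j ∈ S, a j * d j) ≤
      ∑ j ∈ Sᶜ, min (a j) (max 0 (1 - ∑ j' ∈ S, a j' * d j')) * x j) :
    ∑ ω with ∑ j, a j * baseRound r d x ω j < 1,
      bernoulliWeight (fun j => Int.fract (r * x j)) ω ≤ r * exp (2 - r) := by
  have hrx j : 0 ≤ r * x j := mul_nonneg (zero_le_one.trans hr) (hx j)
  have hp j : Int.fract (r * x j) ∈ Set.Icc (0 : ℝ) 1 :=
    ⟨Int.fract_nonneg _, (Int.fract_lt_one _).le⟩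
  set S : Finset ι := {j | (d j : ℝ) ≤ r * x j}
  set b := max 0 (1 - ∑ j ∈ S, a j * d j)
  have hbase ω : ∀ j ∈ S, baseRound r d x ω j = d j := fun j hj => if_pos (mem_filter.1 hj).2
  rcases (le_max_left 0 (1 - ∑ j ∈ S, a j * d j)).eq_or_lt with hb | hb
  · -- a zero residual demand means that `S` alone covers the row
    rw [filter_false_of_mem fun ω _ => not_lt.2 <| one_le_sum_mul_of_residual_le (hbase ω) ?_,
      sum_empty]
    · exact mul_nonneg (zero_le_one.trans hr) (exp_pos _).le
    · simp [← hb, min_eq_right (ha _)]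
  set θ : ι → ℝ := fun j => if j ∈ S then 0 else min (a j) b / b
  have hθ j : θ j ∈ Set.Icc (0 : ℝ) 1 := by
    simp only [θ]
    split_ifs
    · simp
    · exact ⟨div_nonneg (le_min (ha j) hb.le) hb.le, div_le_one_of_le₀ (min_le_right _ _) hb.le⟩
  have hθsum (f : ι → ℝ) : ∑ j, θ j * f j = (∑ j ∈ Sᶜ, min (a j) b * f j) / b := by
    rw [← sum_add_sum_compl S, sum_eq_zero fun j hj => by simp [θ, hj], zero_add, sum_div]
    exact sum_congr rfl fun j hj => by simp [θ, mem_compl.1 hj, div_mul_eq_mul_div]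
  set γ := 1 - ∑ j, θ j * ⌊r * x j⌋₊
  refine (sum_le_sum_of_subset_of_nonneg ?_ fun ω _ _ => bernoulliWeight_nonneg hp ω).trans
    (sum_bernoulliWeight_filter_lt_le hp hθ (γ := γ) ?_ hr ?_)
  · intro ω
    simp only [mem_filter, mem_univ, true_and]
    contrapose!
    intro hγ
    refine one_le_sum_mul_of_residual_le (hbase ω) ?_
    rw [← one_le_div hb, ← hθsum, sum_mul_baseRound_eq fun j hj => by simp [θ, S, hj]]
    linarith
  · linarith [sum_nonneg fun j (_ : j ∈ univ) => mul_nonneg (hθ j).1 (Nat.cast_nonneg ⌊r * x j⌋₊)]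
  · have hfract j : Int.fract (r * x j) = r * x j - ⌊r * x j⌋₊ := by
      rw [natCast_floor_eq_intCast_floor (hrx j), Int.self_sub_floor]
    have hθx : 1 ≤ ∑ j, θ j * x j := by
      rw [hθsum, one_le_div hb]
      exact hKC S
    simp only [hfract, mul_sub, sum_sub_distrib, γ, mul_left_comm _ r, ← mul_sum]
    nlinarith

end Rounding

section Alteration

variable {ι κ : Type*} [Fintype ι] [Fintype κ] {A : κ → ι → ℝ} {d : ι → ℕ} {w : κ → ι → ℕ}
  {u : ι → ℕ}

noncomputable def uncoveredRows (A : κ → ι → ℝ) (u : ι → ℕ) : Finset κ :=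
  {i | ∑ j, A i j * u j < 1}

noncomputable def alteration (A : κ → ι → ℝ) (d : ι → ℕ) (w : κ → ι → ℕ) (u : ι → ℕ) (j : ι) : ℕ :=
  min (d j) (u j + ∑ i ∈ uncoveredRows A u, w i j)

theorem one_le_sum_mul_alteration (hA : ∀ i j, 0 ≤ A i j) (hw : ∀ i, 1 ≤ ∑ j, A i j * w i j)
    (hwd : ∀ i j, w i j ≤ d j) (hud : ∀ j, u j ≤ d j) (i : κ) :
    1 ≤ ∑ j, A i j * alteration A d w u j := by
  have mono {v : ι → ℕ} (hv : ∀ j, v j ≤ alteration A d w u j) :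
      ∑ j, A i j * v j ≤ ∑ j, A i j * alteration A d w u j :=
    sum_le_sum fun j _ => mul_le_mul_of_nonneg_left (by exact_mod_cast hv j) (hA i j)
  by_cases hi : i ∈ uncoveredRows A u
  · refine (hw i).trans (mono fun j => le_min (hwd i j) ?_)
    exact (single_le_sum (f := (w · j)) (fun _ _ => Nat.zero_le _) hi).trans (Nat.le_add_left _ _)
  · have : 1 ≤ ∑ j, A i j * u j := by simpa [uncoveredRows] using hi
    exact this.trans (mono fun j => le_min (hud j) (Nat.le_add_right _ _))

theorem sum_mul_alteration_le {c : ι → ℝ} (hc : ∀ j, 0 ≤ c j) :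
    ∑ j, c j * alteration A d w u j ≤
      ∑ j, c j * u j + ∑ i ∈ uncoveredRows A u, ∑ j, c j * w i j := by
  calc ∑ j, c j * alteration A d w u j
      ≤ ∑ j, c j * (u j + ∑ i ∈ uncoveredRows A u, w i j : ℕ) :=
        sum_le_sum fun j _ => mul_le_mul_of_nonneg_left (by exact_mod_cast min_le_right _ _) (hc j)
    _ = _ := by
        push_cast
        simp_rw [mul_add, sum_add_distrib, mul_sum]
        rw [sum_comm]

end Alteration

section ExpectedCost

variable {ι κ : Type*} [Fintype ι] [DecidableEq ι] [Fintype κ] {A : κ → ι → ℝ} {d : ι → ℕ}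
  {w : κ → ι → ℕ} {r q : ℝ} {x c : ι → ℝ}

theorem sum_bernoulliWeight_mul_sum_mul_alteration_le (hr : 0 ≤ r) (hx : ∀ j, 0 ≤ x j)
    (hc : ∀ j, 0 ≤ c j)
    (hq : ∀ i, ∑ ω with ∑ j, A i j * baseRound r d x ω j < 1,
      bernoulliWeight (fun j => Int.fract (r * x j)) ω ≤ q) :
    ∑ ω, bernoulliWeight (fun j => Int.fract (r * x j)) ω *
        ∑ j, c j * alteration A d w (baseRound r d x ω) j ≤
      r * ∑ j, c j * x j + q * ∑ i, ∑ j, c j * w i j := by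
  set W := bernoulliWeight fun j => Int.fract (r * x j)
  have hW ω : 0 ≤ W ω :=
    bernoulliWeight_nonneg (fun _ => ⟨Int.fract_nonneg _, (Int.fract_lt_one _).le⟩) ω
  have hrx j : 0 ≤ r * x j := mul_nonneg hr (hx j)
  calc _ ≤ ∑ ω, W ω * (∑ j, c j * baseRound r d x ω j +
          ∑ i ∈ uncoveredRows A (baseRound r d x ω), ∑ j, c j * w i j) :=
        sum_le_sum fun ω _ => mul_le_mul_of_nonneg_left (sum_mul_alteration_le hc) (hW ω)
    _ = ∑ j, c j * ∑ ω, W ω * baseRound r d x ω j +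
          ∑ i, (∑ ω with ∑ j, A i j * baseRound r d x ω j < 1, W ω) * ∑ j, c j * w i j := by
        simp only [mul_add, sum_add_distrib]
        congr 1
        · simp only [mul_sum]
          rw [sum_comm]
          exact sum_congr rfl fun j _ => sum_congr rfl fun ω _ => mul_left_comm _ _ _
        · simp only [mul_sum (uncoveredRows A _), sum_mul]
          exact sum_comm' fun ω i => by simp [uncoveredRows]
    _ ≤ ∑ j, c j * (r * x j) + ∑ i, q * ∑ j, c j * w i j := by
        gcongr with j _ i _
        · exact hc j
        · exact sum_bernoulliWeight_mul_baseRound_le j (hrx j)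
        · exact sum_nonneg fun j _ => mul_nonneg (hc j) (Nat.cast_nonneg _)
        · exact hq i
    _ = r * ∑ j, c j * x j + q * ∑ i, ∑ j, c j * w i j := by
        rw [mul_sum, mul_sum]
        exact congrArg₂ _ (sum_congr rfl fun j _ => mul_left_comm _ _ _) rfl

end ExpectedCost

theorem lt_log_of_two_le {D : ℝ} (hD : 2 ≤ D) : 0.69 < log D :=
  (log_two_gt_d9.trans_le' (by norm_num)).trans_le (log_le_log two_pos hD)

theorem one_le_log_add_log_log_add_two {D : ℝ} (hD : 2 ≤ D) : 1 ≤ log D + log (log D) + 2 := by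
  have hL := lt_log_of_two_le hD
  have hinv : (log D)⁻¹ < 1.45 := by
    rw [inv_lt_comm₀ (hL.trans' (by norm_num)) (by norm_num)]
    linarith
  linarith [one_sub_inv_le_log_of_pos (hL.trans' (by norm_num))]

theorem mul_mul_exp_sub_le_four {D : ℝ} (hD : 2 ≤ D) :
    D * ((log D + log (log D) + 2) * exp (2 - (log D + log (log D) + 2))) ≤ 4 := by
  set L := log D
  have hL : 0.69 < L := lt_log_of_two_le hD
  have hL0 : 0 < L := hL.trans' (by norm_num)
  -- `exp (2 - r) = 1 / (D * L)`, so the left side is `r / L`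
  have hexp : exp (2 - (L + log L + 2)) = (D * L)⁻¹ := by
    rw [show 2 - (L + log L + 2) = -(L + log L) by ring, exp_neg, exp_add, exp_log hL0,
      exp_log (by linarith)]
  rw [hexp, ← div_eq_mul_inv, mul_div_assoc', mul_div_mul_left _ _ (by positivity : D ≠ 0),
    div_le_iff₀ hL0]
  linarith [log_le_sub_one_of_pos hL0]

theorem exists_isProbabilityMeasure_lintegral_ofReal_eq {Ω : Type*} [Fintype Ω]
    [MeasurableSpace Ω] [MeasurableSingletonClass Ω] {W : Ω → ℝ} (hW : ∀ ω, 0 ≤ W ω)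
    (hW1 : ∑ ω, W ω = 1) :
    ∃ μ : Measure Ω, IsProbabilityMeasure μ ∧ ∀ f : Ω → ℝ, (∀ ω, 0 ≤ f ω) →
      ∫⁻ ω, ENNReal.ofReal (f ω) ∂μ = ENNReal.ofReal (∑ ω, W ω * f ω) := by
  let P := PMF.ofFintype (fun ω => ENNReal.ofReal (W ω))
    (by rw [← ENNReal.ofReal_sum_of_nonneg fun ω _ => hW ω, hW1, ENNReal.ofReal_one])
  refine ⟨P.toMeasure, inferInstance, fun f hf => ?_⟩
  rw [lintegral_fintype, ENNReal.ofReal_sum_of_nonneg fun ω _ => mul_nonneg (hW ω) (hf ω)]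
  refine sum_congr rfl fun ω _ => ?_
  rw [P.toMeasure_apply_singleton ω (measurableSet_singleton ω), PMF.ofFintype_apply,
    ENNReal.ofReal_mul (hW ω), mul_comm]

/-- rounding a solution of the knapsack-cover LP, ℓ0-sparse bound,
respecting multiplicity constraints (Theorem `l0-alteration-multiplicity`). -/
theorem stmt_2 :
    ∃ C₀ : ℝ, 0 ≤ C₀ ∧
      ∀ (m n : ℕ) (A : Fin m → Fin n → ℝ) (c : Fin n → ℝ) (d : Fin n → ℕ)
        (x : Fin n → ℝ) (Δ₀ : ℕ),
        (∀ i j, A i j ∈ Set.Icc (0 : ℝ) 1) →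
        (∀ j, 0 ≤ c j) → (∀ j, 0 ≤ x j) →
        (∀ (S : Finset (Fin n)) (i : Fin m),
          max 0 (1 - ∑ j ∈ S, A i j * (d j : ℝ)) ≤
            ∑ j ∈ Sᶜ, min (A i j) (max 0 (1 - ∑ j' ∈ S, A i j' * (d j' : ℝ))) * x j) →
        Δ₀ = (Finset.univ.sup fun j : Fin n =>
          (Finset.univ.filter fun i : Fin m => A i j ≠ 0).card) →
        2 ≤ Δ₀ →
        ∃ (Ω : Type) (_ : MeasureSpace Ω) (z : Ω → Fin n → ℕ),
          IsProbabilityMeasure (volume : Measure Ω) ∧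
          Measurable z ∧
          (∀ᵐ ω ∂(volume : Measure Ω),
            (∀ i, 1 ≤ ∑ j, A i j * (z ω j : ℝ)) ∧ ∀ j, z ω j ≤ d j) ∧
          ∫⁻ ω, ENNReal.ofReal (∑ j, c j * (z ω j : ℝ)) ≤
            ENNReal.ofReal
              ((Real.log Δ₀ + Real.log (Real.log Δ₀) + C₀) * ∑ j, c j * x j) := by
  refine ⟨10, by norm_num, fun m n A c d x Δ₀ hA hc hx hKC hΔ hΔ₂ => ?_⟩
  have hA₀ i j : 0 ≤ A i j := (hA i j).1
  have hD : (2 : ℝ) ≤ Δ₀ := by exact_mod_cast hΔ₂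
  set r := log Δ₀ + log (log Δ₀) + 2
  have hr : 1 ≤ r := one_le_log_add_log_log_add_two hD
  have hrx j : 0 ≤ r * x j := mul_nonneg (zero_le_one.trans hr) (hx j)
  obtain ⟨w, hwd, hw, hrepair⟩ := exists_covers_sum_sum_mul_le hA₀ hc hx hKC fun j =>
    hΔ ▸ le_sup (f := fun j => #{i | A i j ≠ 0}) (mem_univ j)
  obtain ⟨μ, hμ, hμint⟩ := exists_isProbabilityMeasure_lintegral_ofReal_eq
    (bernoulliWeight_nonneg fun j => ⟨Int.fract_nonneg (r * x j), (Int.fract_lt_one _).le⟩)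
    (sum_bernoulliWeight _)
  refine ⟨Fin n → Bool, ⟨μ⟩, fun ω => alteration A d w (baseRound r d x ω), hμ,
    measurable_of_countable _, ae_of_all _ fun ω => ⟨one_le_sum_mul_alteration hA₀ hw hwd
      fun j => baseRound_le ω j (hrx j), fun j => min_le_left _ _⟩, ?_⟩
  refine (hμint _ fun ω => sum_nonneg fun j _ => mul_nonneg (hc j) (Nat.cast_nonneg _)).trans_le
    (ENNReal.ofReal_le_ofReal ?_)
  have hcost := sum_bernoulliWeight_mul_sum_mul_alteration_le (w := w) (zero_le_one.trans hr) hx hc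
    fun i => sum_bernoulliWeight_filter_sum_mul_baseRound_lt_le (hA₀ i) hx hr (hKC · i)
  have hq : 0 ≤ r * exp (2 - r) := mul_nonneg (zero_le_one.trans hr) (exp_pos _).le
  have hcx : 0 ≤ ∑ j, c j * x j := sum_nonneg fun j _ => mul_nonneg (hc j) (hx j)
  linarith [mul_le_mul_of_nonneg_left hrepair hq,
    mul_le_mul_of_nonneg_right (mul_mul_exp_sub_le_four hD) hcx]
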